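/- arXiv:1906.11101 — 2 statements merged into one kernel-verified Lean document; each statement's English description precedes it below -/
import Mathlib

section
/- For every ε > 0 and every ξ ∈ ℝ, the second-order expansion of the projection symbols holds with a uniform quadratic remainder: ‖Π₊^ε(ξ) − Π₊⁰ − (εξ/2)σ₁‖ ≤ ε²ξ² and ‖Π₋^ε(ξ) − Π₋⁰ + (εξ/2)σ₁‖ ≤ ε²ξ², where ‖·‖ is the operator norm on M₂(ℂ), Π₊⁰ = diag(1,0) and Π₋⁰ = diag(0,1). -/
open Matrix
open scoped Matrix.Norms.L2Operator

noncomputable section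

/-- The Pauli matrix σ₁. -/
def pauli1 : Matrix (Fin 2) (Fin 2) ℂ := !![0, 1; 1, 0]

/-- The Pauli matrix σ₃. -/
def pauli3 : Matrix (Fin 2) (Fin 2) ℂ := !![1, 0; 0, -1]

/-- The free Dirac symbol Q_ε(ξ) = εξσ₁ + σ₃. -/
def diracSymbol (ε ξ : ℝ) : Matrix (Fin 2) (Fin 2) ℂ :=
  ((ε * ξ : ℝ) : ℂ) • pauli1 + pauli3

/-- The projection symbol Π₊^ε(ξ) = (1/2)(I₂ + (1+ε²ξ²)^{-1/2} Q_ε(ξ)). -/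
def projPlus (ε ξ : ℝ) : Matrix (Fin 2) (Fin 2) ℂ :=
  (1 / 2 : ℂ) • ((1 : Matrix (Fin 2) (Fin 2) ℂ)
    + (((Real.sqrt (1 + ε ^ 2 * ξ ^ 2))⁻¹ : ℝ) : ℂ) • diracSymbol ε ξ)

/-- The projection symbol Π₋^ε(ξ) = (1/2)(I₂ − (1+ε²ξ²)^{-1/2} Q_ε(ξ)). -/
def projMinus (ε ξ : ℝ) : Matrix (Fin 2) (Fin 2) ℂ :=
  (1 / 2 : ℂ) • ((1 : Matrix (Fin 2) (Fin 2) ℂ)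
    - (((Real.sqrt (1 + ε ^ 2 * ξ ^ 2))⁻¹ : ℝ) : ℂ) • diracSymbol ε ξ)

/-- The limiting diagonal projection Π₊⁰ = diag(1,0). -/
def projPlus0 : Matrix (Fin 2) (Fin 2) ℂ := !![1, 0; 0, 0]

/-- The limiting diagonal projection Π₋⁰ = diag(0,1). -/
def projMinus0 : Matrix (Fin 2) (Fin 2) ℂ := !![0, 0; 0, 1]



/-!
With `t = ε²ξ²`, the Π₊-remainder is `((1 + t)^{-1/2} - 1)/2 • Q_ε(ξ)`, and since `σ₁, σ₃` are
anticommuting Hermitian involutions, `Q_ε(ξ)` is Hermitian with `Q_ε(ξ)² = (1 + t) I`, so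
`‖Q_ε(ξ)‖ = √(1 + t)` and the remainder has norm `(√(1 + t) - 1)/2 ≤ t/4`. Since `Π₋ = I - Π₊` at `ε`
and at `0`, the Π₋-remainder is the negative of the Π₊-remainder.
-/

theorem Matrix.l2_opNorm_eq_sqrt_of_conjTranspose_mul_self_eq_smul_one {𝕜 m n : Type*} [RCLike 𝕜]
    [Fintype m] [Fintype n] [DecidableEq n] [Nonempty n] {A : Matrix m n 𝕜} {r : ℝ}
    (hr : 0 ≤ r) (hA : Aᴴ * A = (r : 𝕜) • 1) : ‖A‖ = √r := by
  have h := Matrix.l2_opNorm_conjTranspose_mul_self A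
  rw [hA, norm_smul, norm_one, mul_one, RCLike.norm_ofReal, abs_of_nonneg hr] at h
  rw [h, Real.sqrt_mul_self (norm_nonneg A)]

theorem isHermitian_pauli1 : pauli1.IsHermitian := by
  ext i j
  fin_cases i <;> fin_cases j <;> simp [pauli1]

theorem isHermitian_pauli3 : pauli3.IsHermitian := by
  ext i j
  fin_cases i <;> fin_cases j <;> simp [pauli3]

theorem pauli1_mul_self : pauli1 * pauli1 = 1 := by
  simp [pauli1, one_fin_two]

theorem pauli3_mul_self : pauli3 * pauli3 = 1 := by
  simp [pauli3, one_fin_two]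

theorem pauli3_mul_pauli1 : pauli3 * pauli1 = -(pauli1 * pauli3) := by
  simp [pauli1, pauli3]

theorem isHermitian_diracSymbol (ε ξ : ℝ) : (diracSymbol ε ξ).IsHermitian :=
  (isHermitian_pauli1.smul (Complex.conj_ofReal _)).add isHermitian_pauli3

theorem diracSymbol_mul_self (ε ξ : ℝ) :
    diracSymbol ε ξ * diracSymbol ε ξ = ((1 + ε ^ 2 * ξ ^ 2 : ℝ) : ℂ) • 1 := by
  simp only [diracSymbol, add_mul, mul_add, smul_mul_assoc, mul_smul_comm, pauli1_mul_self,
    pauli3_mul_self, pauli3_mul_pauli1]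
  push_cast
  module

theorem norm_diracSymbol (ε ξ : ℝ) : ‖diracSymbol ε ξ‖ = √(1 + ε ^ 2 * ξ ^ 2) := by
  refine Matrix.l2_opNorm_eq_sqrt_of_conjTranspose_mul_self_eq_smul_one (by positivity) ?_
  rw [(isHermitian_diracSymbol ε ξ).eq]
  exact diracSymbol_mul_self ε ξ

theorem projPlus0_eq : projPlus0 = (1 / 2 : ℂ) • (1 + pauli3) := by
  rw [projPlus0, pauli3, one_fin_two]
  norm_num

theorem projPlus_sub_projPlus0_sub_smul_pauli1 (ε ξ : ℝ) :
    projPlus ε ξ - projPlus0 - ((ε * ξ / 2 : ℝ) : ℂ) • pauli1 =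
      ((((√(1 + ε ^ 2 * ξ ^ 2))⁻¹ - 1) / 2 : ℝ) : ℂ) • diracSymbol ε ξ := by
  rw [projPlus, projPlus0_eq, diracSymbol]
  push_cast
  module

theorem projMinus_sub_projMinus0_add_smul_pauli1 (ε ξ : ℝ) (c : ℂ) :
    projMinus ε ξ - projMinus0 + c • pauli1 = -(projPlus ε ξ - projPlus0 - c • pauli1) := by
  have hMinus : projMinus ε ξ = 1 - projPlus ε ξ := by
    rw [projMinus, projPlus]
    module
  have hMinus0 : projMinus0 = 1 - projPlus0 := by
    simp [projMinus0, projPlus0, one_fin_two]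
  rw [hMinus, hMinus0]
  abel

theorem abs_inv_sub_one_mul {r : ℝ} (hr : 0 < r) : |r⁻¹ - 1| * r = |1 - r| := by
  rw [← abs_of_pos hr, ← abs_mul, abs_of_pos hr, sub_mul, inv_mul_cancel₀ hr.ne', one_mul]

theorem sqrt_one_add_le_one_add_half {t : ℝ} (ht : 0 ≤ t) : √(1 + t) ≤ 1 + t / 2 :=
  Real.sqrt_le_iff.mpr ⟨by positivity, by nlinarith⟩

theorem proj_symbols_second_order_expansion_general (ε ξ : ℝ) :
    ‖projPlus ε ξ - projPlus0 - ((ε * ξ / 2 : ℝ) : ℂ) • pauli1‖ ≤ ε ^ 2 * ξ ^ 2 ∧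
    ‖projMinus ε ξ - projMinus0 + ((ε * ξ / 2 : ℝ) : ℂ) • pauli1‖ ≤ ε ^ 2 * ξ ^ 2 := by
  set t := ε ^ 2 * ξ ^ 2
  have ht : 0 ≤ t := by positivity
  have hr : 1 ≤ √(1 + t) := Real.one_le_sqrt.mpr (by linarith)
  have hplus : ‖projPlus ε ξ - projPlus0 - ((ε * ξ / 2 : ℝ) : ℂ) • pauli1‖ ≤ t := by
    rw [projPlus_sub_projPlus0_sub_smul_pauli1, norm_smul, Complex.norm_real, Real.norm_eq_abs,
      norm_diracSymbol, abs_div, abs_two, div_mul_eq_mul_div, abs_inv_sub_one_mul (by positivity),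
      abs_of_nonpos (by linarith)]
    linarith [sqrt_one_add_le_one_add_half ht]
  refine ⟨hplus, ?_⟩
  rwa [projMinus_sub_projMinus0_add_smul_pauli1, norm_neg]

/-- second-order expansion of the projection symbols with uniform
quadratic remainder, in the l² operator norm on M₂(ℂ):
‖Π₊^ε(ξ) − Π₊⁰ − (εξ/2)σ₁‖ ≤ ε²ξ² and ‖Π₋^ε(ξ) − Π₋⁰ + (εξ/2)σ₁‖ ≤ ε²ξ². -/
theorem proj_symbols_second_order_expansion (ε ξ : ℝ) (hε : 0 < ε) :
    ‖projPlus ε ξ - projPlus0 - ((ε * ξ / 2 : ℝ) : ℂ) • pauli1‖ ≤ ε ^ 2 * ξ ^ 2 ∧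
    ‖projMinus ε ξ - projMinus0 + ((ε * ξ / 2 : ℝ) : ℂ) • pauli1‖ ≤ ε ^ 2 * ξ ^ 2 :=
  proj_symbols_second_order_expansion_general ε ξ
end
end

section
/- Pointwise stability of the nonlinear substep (pointwise core of the stability lemma for the Lie–Trotter propagator): for all λ₁, λ₂ ∈ ℝ, τ ≥ 0, M ≥ 0 and all Φ, Ψ ∈ ℂ² with |Φ| ≤ M and |Ψ| ≤ M, one has |exp(−iτF(Φ))·Φ − exp(−iτF(Ψ))·Ψ| ≤ (1 + 2(|λ₁| + |λ₂|)·M²·τ)·|Φ − Ψ|, where |·| is the Euclidean norm on ℂ². -/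
/-! Since `F(Φ)` is a real diagonal matrix, `exp(-iτF(Φ))` multiplies the `k`-th coordinate by the
unit phase `exp(-iτθ_k(Φ))`, where `θ_k(Φ) = ±λ₁(|Φ₀|² - |Φ₁|²) + λ₂(|Φ₀|² + |Φ₁|²)`. Splitting
`e^{-iτF(Φ)}Φ - e^{-iτF(Ψ)}Ψ = e^{-iτF(Φ)}(Φ - Ψ) + (e^{-iτF(Φ)} - e^{-iτF(Ψ)})Ψ`,
the first term has norm `|Φ - Ψ|` and the second at most `τ · max_k |θ_k(Φ) - θ_k(Ψ)| · |Ψ|`,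
since `t ↦ e^{it}` is 1-Lipschitz. Finally
`|θ_k(Φ) - θ_k(Ψ)| ≤ (|λ₁| + |λ₂|) ∑_j ||Φ_j|² - |Ψ_j|²|`, and Cauchy–Schwarz bounds that sum
by `(|Φ| + |Ψ|)|Φ - Ψ| ≤ 2M|Φ - Ψ|`. -/

open Matrix

noncomputable section

/-- The cubic nonlinearity F(Φ) = λ₁(Φ*σ₃Φ)σ₃ + λ₂|Φ|²I₂, written with
Φ*MΨ = star Φ ⬝ᵥ M.mulVec Ψ. -/
def Fnl (l1 l2 : ℝ) (Φ : Fin 2 → ℂ) : Matrix (Fin 2) (Fin 2) ℂ :=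
  ((l1 : ℂ) * (star Φ ⬝ᵥ pauli3.mulVec Φ)) • pauli3
    + ((l2 : ℂ) * (star Φ ⬝ᵥ Φ)) • (1 : Matrix (Fin 2) (Fin 2) ℂ)

/-- g₁(Φ₊,Φ₋) = λ₁(Φ₋*σ₃Φ₊)σ₃ + λ₂(Φ₋*Φ₊)I₂. -/
def gOsc (l1 l2 : ℝ) (Φp Φm : Fin 2 → ℂ) : Matrix (Fin 2) (Fin 2) ℂ :=
  ((l1 : ℂ) * (star Φm ⬝ᵥ pauli3.mulVec Φp)) • pauli3
    + ((l2 : ℂ) * (star Φm ⬝ᵥ Φp)) • (1 : Matrix (Fin 2) (Fin 2) ℂ)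

/-- g₂(Φ₊,Φ₋) = λ₁(Φ₊*σ₃Φ₊ + Φ₋*σ₃Φ₋)σ₃ + λ₂(|Φ₊|² + |Φ₋|²)I₂. -/
def gNonOsc (l1 l2 : ℝ) (Φp Φm : Fin 2 → ℂ) : Matrix (Fin 2) (Fin 2) ℂ :=
  ((l1 : ℂ) * (star Φp ⬝ᵥ pauli3.mulVec Φp + star Φm ⬝ᵥ pauli3.mulVec Φm)) • pauli3
    + ((l2 : ℂ) * (star Φp ⬝ᵥ Φp + star Φm ⬝ᵥ Φm)) • (1 : Matrix (Fin 2) (Fin 2) ℂ)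

/-- The Euclidean norm on ℂ². -/
def eucNorm (Φ : Fin 2 → ℂ) : ℝ := Real.sqrt (‖Φ 0‖ ^ 2 + ‖Φ 1‖ ^ 2)

open Complex in
theorem Complex.norm_exp_I_mul_ofReal_sub_exp_I_mul_ofReal_le (a b : ℝ) :
    ‖exp (I * a) - exp (I * b)‖ ≤ |a - b| := by
  have h : exp (I * a) - exp (I * b) = exp (I * b) * (exp (I * ↑(a - b)) - 1) := by
    rw [mul_sub, ← exp_add, mul_one]; push_cast; ring_nf
  rw [h, norm_mul, norm_exp_I_mul_ofReal, one_mul]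
  exact Real.norm_exp_I_mul_ofReal_sub_one_le

theorem abs_sq_norm_sub_sq_norm_le {E : Type*} [SeminormedAddCommGroup E] (a b : E) :
    |‖a‖ ^ 2 - ‖b‖ ^ 2| ≤ (‖a‖ + ‖b‖) * ‖a - b‖ := by
  rw [sq_sub_sq, abs_mul, abs_of_nonneg (by positivity)]
  gcongr
  exact abs_norm_sub_norm_le a b

theorem abs_mul_sub_add_mul_add_le (a b x y : ℝ) :
    |a * (x - y) + b * (x + y)| ≤ (|a| + |b|) * (|x| + |y|) :=
  calc |a * (x - y) + b * (x + y)| ≤ |a| * |x - y| + |b| * |x + y| := by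
        rw [← abs_mul, ← abs_mul]; exact abs_add_le _ _
    _ ≤ |a| * (|x| + |y|) + |b| * (|x| + |y|) := by
        gcongr
        exacts [abs_sub _ _, abs_add_le _ _]
    _ = (|a| + |b|) * (|x| + |y|) := by ring

namespace EuclideanSpace

variable {𝕜 ι : Type*} [RCLike 𝕜] [Fintype ι]

theorem sum_norm_mul_norm_le (x y : EuclideanSpace 𝕜 ι) :
    ∑ i, ‖x i‖ * ‖y i‖ ≤ ‖x‖ * ‖y‖ := by
  simpa only [EuclideanSpace.norm_eq] using
    Real.sum_mul_le_sqrt_mul_sqrt Finset.univ (‖x ·‖) (‖y ·‖)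

theorem norm_le_mul_norm_of_forall_norm_le {x y : EuclideanSpace 𝕜 ι} {c : ℝ} (hc : 0 ≤ c)
    (h : ∀ i, ‖x i‖ ≤ c * ‖y i‖) : ‖x‖ ≤ c * ‖y‖ := by
  rw [← abs_of_nonneg hc, ← Real.sqrt_sq_eq_abs, EuclideanSpace.norm_eq, EuclideanSpace.norm_eq,
    ← Real.sqrt_mul (sq_nonneg _), Finset.mul_sum]
  gcongr with i
  rw [← mul_pow]
  exact pow_le_pow_left₀ (norm_nonneg _) (abs_of_nonneg hc ▸ h i) 2

theorem sum_abs_sq_norm_sub_sq_norm_le (x y : EuclideanSpace 𝕜 ι) :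
    ∑ i, |‖x i‖ ^ 2 - ‖y i‖ ^ 2| ≤ (‖x‖ + ‖y‖) * ‖x - y‖ :=
  calc ∑ i, |‖x i‖ ^ 2 - ‖y i‖ ^ 2| ≤ ∑ i, (‖x i‖ * ‖(x - y) i‖ + ‖y i‖ * ‖(x - y) i‖) := by
        gcongr with i
        rw [← add_mul]
        exact abs_sq_norm_sub_sq_norm_le _ _
    _ ≤ ‖x‖ * ‖x - y‖ + ‖y‖ * ‖x - y‖ := by
        rw [Finset.sum_add_distrib]
        gcongr <;> exact sum_norm_mul_norm_le _ _
    _ = (‖x‖ + ‖y‖) * ‖x - y‖ := by ring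

end EuclideanSpace

section PhaseMul

open Complex

variable {ι : Type*}

def phaseMul (θ : ι → ℝ) (x : EuclideanSpace ℂ ι) : EuclideanSpace ℂ ι :=
  WithLp.toLp 2 fun i => exp (I * θ i) * x i

@[simp]
theorem phaseMul_apply (θ : ι → ℝ) (x : EuclideanSpace ℂ ι) (i : ι) :
    phaseMul θ x i = exp (I * θ i) * x i :=
  rfl

theorem phaseMul_sub (θ : ι → ℝ) (x y : EuclideanSpace ℂ ι) :
    phaseMul θ (x - y) = phaseMul θ x - phaseMul θ y := by
  ext i
  simp [mul_sub]

theorem norm_phaseMul [Fintype ι] (θ : ι → ℝ) (x : EuclideanSpace ℂ ι) :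
    ‖phaseMul θ x‖ = ‖x‖ := by
  simp only [EuclideanSpace.norm_eq, phaseMul_apply, norm_mul, norm_exp_I_mul_ofReal, one_mul]

theorem norm_phaseMul_sub_phaseMul_le [Fintype ι] {θ η : ι → ℝ} {C : ℝ} (hC : 0 ≤ C)
    (hθη : ∀ i, |θ i - η i| ≤ C) (x y : EuclideanSpace ℂ ι) :
    ‖phaseMul θ x - phaseMul η y‖ ≤ ‖x - y‖ + C * ‖y‖ := by
  have hsplit :
      phaseMul θ x - phaseMul η y = phaseMul θ (x - y) + (phaseMul θ y - phaseMul η y) := by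
    rw [phaseMul_sub]; abel
  have hphase : ‖phaseMul θ y - phaseMul η y‖ ≤ C * ‖y‖ := by
    refine EuclideanSpace.norm_le_mul_norm_of_forall_norm_le hC fun i => ?_
    rw [PiLp.sub_apply, phaseMul_apply, phaseMul_apply, ← sub_mul, norm_mul]
    gcongr
    exact (Complex.norm_exp_I_mul_ofReal_sub_exp_I_mul_ofReal_le _ _).trans (hθη i)
  calc ‖phaseMul θ x - phaseMul η y‖
      ≤ ‖phaseMul θ (x - y)‖ + ‖phaseMul θ y - phaseMul η y‖ := hsplit ▸ norm_add_le _ _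
    _ ≤ ‖x - y‖ + C * ‖y‖ := by rw [norm_phaseMul]; gcongr

theorem exp_smul_diagonal_mulVec [Fintype ι] [DecidableEq ι] (τ : ℝ) (θ : ι → ℝ) (v : ι → ℂ) :
    WithLp.toLp 2 ((NormedSpace.exp ((-(I * τ)) • Matrix.diagonal fun k => (θ k : ℂ))).mulVec v)
      = phaseMul (fun k => -τ * θ k) (WithLp.toLp 2 v) := by
  have hdiag : (-(I * τ)) • Matrix.diagonal (fun k => (θ k : ℂ))
      = Matrix.diagonal fun k => I * ((-τ * θ k : ℝ) : ℂ) := by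
    rw [← Matrix.diagonal_smul]
    congr 1; ext k
    rw [Pi.smul_apply, smul_eq_mul]; push_cast; ring
  ext k
  rw [hdiag, Matrix.exp_diagonal, WithLp.ofLp_toLp, Matrix.mulVec_diagonal, Pi.exp_def,
    ← Complex.exp_eq_exp_ℂ]
  rfl

end PhaseMul

theorem pauli3_eq_diagonal : pauli3 = Matrix.diagonal ![1, -1] := by
  ext i j; fin_cases i <;> fin_cases j <;> rfl

theorem star_dotProduct_self_fin_two (Φ : Fin 2 → ℂ) :
    star Φ ⬝ᵥ Φ = ((‖Φ 0‖ ^ 2 + ‖Φ 1‖ ^ 2 : ℝ) : ℂ) := by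
  simp [dotProduct, Fin.sum_univ_two, Complex.conj_mul']

theorem star_dotProduct_pauli3_mulVec (Φ : Fin 2 → ℂ) :
    star Φ ⬝ᵥ pauli3 *ᵥ Φ = ((‖Φ 0‖ ^ 2 - ‖Φ 1‖ ^ 2 : ℝ) : ℂ) := by
  simp only [pauli3_eq_diagonal, dotProduct, mulVec_diagonal, Fin.sum_univ_two, Pi.star_apply,
    RCLike.star_def, cons_val_zero, cons_val_one, cons_val_fin_one]
  push_cast
  rw [← Complex.conj_mul', ← Complex.conj_mul']
  ring

def FnlDiag (l1 l2 : ℝ) (Φ : Fin 2 → ℂ) (k : Fin 2) : ℝ :=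
  l1 * ![1, -1] k * (‖Φ 0‖ ^ 2 - ‖Φ 1‖ ^ 2) + l2 * (‖Φ 0‖ ^ 2 + ‖Φ 1‖ ^ 2)

theorem Fnl_eq_diagonal (l1 l2 : ℝ) (Φ : Fin 2 → ℂ) :
    Fnl l1 l2 Φ = Matrix.diagonal fun k => (FnlDiag l1 l2 Φ k : ℂ) := by
  rw [Fnl, star_dotProduct_self_fin_two, star_dotProduct_pauli3_mulVec, pauli3_eq_diagonal]
  ext i j
  fin_cases i <;> fin_cases j <;> simp [FnlDiag]

theorem abs_FnlDiag_sub_le (l1 l2 : ℝ) (Φ Ψ : Fin 2 → ℂ) (k : Fin 2) :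
    |FnlDiag l1 l2 Φ k - FnlDiag l1 l2 Ψ k|
      ≤ (|l1| + |l2|) * ∑ j, |‖Φ j‖ ^ 2 - ‖Ψ j‖ ^ 2| := by
  have hsign : |l1 * ![1, -1] k| = |l1| := by fin_cases k <;> simp
  rw [Fin.sum_univ_two, ← hsign]
  convert abs_mul_sub_add_mul_add_le (l1 * ![1, -1] k) l2
    (‖Φ 0‖ ^ 2 - ‖Ψ 0‖ ^ 2) (‖Φ 1‖ ^ 2 - ‖Ψ 1‖ ^ 2) using 2
  simp only [FnlDiag]; ring

theorem eucNorm_eq_norm (Φ : Fin 2 → ℂ) :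
    eucNorm Φ = ‖(WithLp.toLp 2 Φ : EuclideanSpace ℂ (Fin 2))‖ := by
  rw [EuclideanSpace.norm_eq, Fin.sum_univ_two]; rfl

theorem substep_pointwise_stability_general (l1 l2 τ M : ℝ) (hτ : 0 ≤ τ)
    (Φ Ψ : Fin 2 → ℂ) (hΦ : eucNorm Φ ≤ M) (hΨ : eucNorm Ψ ≤ M) :
    eucNorm ((NormedSpace.exp ((-(Complex.I * (τ : ℂ))) • Fnl l1 l2 Φ)).mulVec Φ
        - (NormedSpace.exp ((-(Complex.I * (τ : ℂ))) • Fnl l1 l2 Ψ)).mulVec Ψ)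
      ≤ (1 + 2 * (|l1| + |l2|) * M ^ 2 * τ) * eucNorm (Φ - Ψ) := by
  rw [eucNorm_eq_norm] at hΦ hΨ ⊢
  rw [eucNorm_eq_norm, WithLp.toLp_sub, WithLp.toLp_sub, Fnl_eq_diagonal, Fnl_eq_diagonal,
    exp_smul_diagonal_mulVec, exp_smul_diagonal_mulVec]
  set x : EuclideanSpace ℂ (Fin 2) := WithLp.toLp 2 Φ
  set y : EuclideanSpace ℂ (Fin 2) := WithLp.toLp 2 Ψ
  set C := τ * ((|l1| + |l2|) * ((‖x‖ + ‖y‖) * ‖x - y‖))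
  have hphase (k : Fin 2) : |-τ * FnlDiag l1 l2 Φ k - -τ * FnlDiag l1 l2 Ψ k| ≤ C := by
    rw [← mul_sub, abs_mul, abs_neg, abs_of_nonneg hτ]
    refine mul_le_mul_of_nonneg_left ((abs_FnlDiag_sub_le l1 l2 Φ Ψ k).trans ?_) hτ
    gcongr
    exact EuclideanSpace.sum_abs_sq_norm_sub_sq_norm_le x y
  have hxy : (‖x‖ + ‖y‖) * ‖y‖ ≤ 2 * M ^ 2 := by nlinarith [norm_nonneg x, norm_nonneg y]
  calc _ ≤ ‖x - y‖ + C * ‖y‖ := norm_phaseMul_sub_phaseMul_le (by positivity) hphase x y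
    _ = ‖x - y‖ + τ * (|l1| + |l2|) * ((‖x‖ + ‖y‖) * ‖y‖) * ‖x - y‖ := by ring
    _ ≤ ‖x - y‖ + τ * (|l1| + |l2|) * (2 * M ^ 2) * ‖x - y‖ := by gcongr
    _ = _ := by ring

/-- pointwise stability of the nonlinear substep: for |Φ|,|Ψ| ≤ M,
|e^{−iτF(Φ)}Φ − e^{−iτF(Ψ)}Ψ| ≤ (1 + 2(|λ₁|+|λ₂|)M²τ)|Φ − Ψ|. -/
theorem substep_pointwise_stability (l1 l2 τ M : ℝ) (hτ : 0 ≤ τ) (hM : 0 ≤ M)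
    (Φ Ψ : Fin 2 → ℂ) (hΦ : eucNorm Φ ≤ M) (hΨ : eucNorm Ψ ≤ M) :
    eucNorm ((NormedSpace.exp ((-(Complex.I * (τ : ℂ))) • Fnl l1 l2 Φ)).mulVec Φ
        - (NormedSpace.exp ((-(Complex.I * (τ : ℂ))) • Fnl l1 l2 Ψ)).mulVec Ψ)
      ≤ (1 + 2 * (|l1| + |l2|) * M ^ 2 * τ) * eucNorm (Φ - Ψ) :=
  substep_pointwise_stability_general l1 l2 τ M hτ Φ Ψ hΦ hΨ
end
end
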